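/- arXiv:2506.11418 — 5 statements merged into one kernel-verified Lean document; each statement's English description precedes it below -/
import Mathlib

section
/- Let n ≥ 2 and let f : [2n−1] → ℝ satisfy f(1)−f(2) ≥ f(2)−f(3) ≥ ⋯ ≥ f(2n−2)−f(2n−1) ≥ 0. Then the alternating partition (A₀, B₀) = ({1,3,…,2n−1}, {2,4,…,2n}) is a maximizer of the objective Σ_{x∈A} Σ_{y∈B} f(|x−y|) over all partitions (A,B) ∈ P_{2n}; that is, for every (A,B) ∈ P_{2n}, Σ_{x∈A} Σ_{y∈B} f(|x−y|) ≤ Σ_{x∈A₀} Σ_{y∈B₀} f(|x−y|). -/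
/-!
A nonincreasing convex `f` on `{1, …, M}` is, up to the constant `f M`, a nonnegative
combination of the tents `d ↦ m - d` (truncated at `0`), `2 ≤ m ≤ M`. All partitions in
`P_{2n}` have `|A| |B| = n²`, so it suffices to treat a single tent. The tent objective
`∑ (m - |x - y|)` counts pairs `x ∈ A`, `y ∈ B` together with a window `W` of `m` consecutive
integers containing both, so it equals `∑_W |A ∩ W| |B ∩ W|`. The sum `|A ∩ W| + |B ∩ W|` does
not depend on the partition, hence each product is largest when the two counts differ by at
most one, which the alternating partition achieves on every window.
-/

open Finset

theorem mul_le_mul_of_add_eq_of_balanced {a b a' b' : ℕ} (hsum : a + b = a' + b')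
    (h₁ : a' ≤ b' + 1) (h₂ : b' ≤ a' + 1) : a * b ≤ a' * b' := by
  rcases (by omega : a' = b' ∨ a' = b' + 1 ∨ b' = a' + 1) with h | h | h <;>
  rcases (by omega : a ≤ b ∨ b + 1 ≤ a) with h' | h' <;>
  · zify at *; nlinarith

theorem card_filter_Icc_le_card_filter_not_add_one (p : ℕ → Prop) [DecidablePred p]
    (hp : ∀ x, p x → ¬ p (x + 1)) (a b : ℕ) :
    #{x ∈ Icc a b | p x} ≤ #{x ∈ Icc a b | ¬ p x} + 1 := by
  have hshift : {x ∈ Icc a b | p x}.image (· + 1) ⊆ insert (b + 1) {x ∈ Icc a b | ¬ p x} := by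
    intro y hy
    simp only [mem_image, mem_filter, mem_Icc] at hy
    obtain ⟨x, ⟨⟨hax, hxb⟩, hpx⟩, rfl⟩ := hy
    simp only [mem_insert, mem_filter, mem_Icc]
    rcases Nat.lt_or_ge x b with hxb' | hxb'
    · exact Or.inr ⟨⟨by omega, hxb'⟩, hp x hpx⟩
    · exact Or.inl (by omega)
  calc #{x ∈ Icc a b | p x} = #({x ∈ Icc a b | p x}.image (· + 1)) :=
        (card_image_of_injective _ (add_left_injective 1)).symm
    _ ≤ #(insert (b + 1) {x ∈ Icc a b | ¬ p x}) := card_le_card hshift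
    _ ≤ _ := card_insert_le _ _

theorem card_filter_odd_Icc_le (a b : ℕ) :
    #{x ∈ Icc a b | Odd x} ≤ #{x ∈ Icc a b | Even x} + 1 := by
  simpa only [Nat.not_odd_iff_even] using card_filter_Icc_le_card_filter_not_add_one
    (fun x => Odd x) (fun x hx => by simpa [Nat.odd_add_one] using hx) a b

theorem card_filter_even_Icc_le (a b : ℕ) :
    #{x ∈ Icc a b | Even x} ≤ #{x ∈ Icc a b | Odd x} + 1 := by
  simpa only [Nat.not_even_iff_odd] using card_filter_Icc_le_card_filter_not_add_one
    (fun x => Even x) (fun x hx => by simpa [Nat.even_add_one] using hx) a b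

theorem filter_Icc_inter_Icc {α : Type*} [LinearOrder α] [LocallyFiniteOrder α] (p : α → Prop)
    [DecidablePred p] (a b c d : α) :
    {x ∈ Icc a b | p x} ∩ Icc c d = {x ∈ Icc (max a c) (min b d) | p x} := by
  ext x
  simp only [mem_inter, mem_filter, mem_Icc, max_le_iff, le_min_iff]
  tauto

theorem disjoint_filter_odd_filter_even (s : Finset ℕ) :
    Disjoint {x ∈ s | Odd x} {x ∈ s | Even x} := by
  simpa only [Nat.not_odd_iff_even] using disjoint_filter_filter_not s s (fun x => Odd x)

theorem filter_odd_union_filter_even (s : Finset ℕ) :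
    {x ∈ s | Odd x} ∪ {x ∈ s | Even x} = s := by
  simpa only [Nat.not_odd_iff_even] using filter_union_filter_not_eq (fun x => Odd x) s

theorem card_inter_add_card_inter_of_union_eq {α : Type*} [DecidableEq α] {A B S : Finset α}
    (hd : Disjoint A B) (hu : A ∪ B = S) (J : Finset α) : #(A ∩ J) + #(B ∩ J) = #(S ∩ J) := by
  rw [← card_union_of_disjoint (hd.mono inter_subset_left inter_subset_left),
    ← union_inter_distrib_right, hu]

theorem tsub_dist_eq_card_inter_Ico (m x y : ℕ) :
    m - Nat.dist x y = #(Ico x (x + m) ∩ Ico y (y + m)) := by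
  rw [Ico_inter_Ico, Nat.card_Ico]
  unfold Nat.dist
  omega

theorem sum_sum_card_inter_eq_sum_mul {α β : Type*} [DecidableEq β] (I : α → Finset β)
    (A B : Finset α) {U : Finset β} (hU : ∀ x ∈ A, I x ⊆ U) :
    ∑ x ∈ A, ∑ y ∈ B, #(I x ∩ I y) = ∑ u ∈ U, #{x ∈ A | u ∈ I x} * #{y ∈ B | u ∈ I y} := by
  have hinter : ∀ x ∈ A, ∀ y, #(I x ∩ I y) =
      ∑ u ∈ U, (if u ∈ I x then 1 else 0) * (if u ∈ I y then 1 else 0) := by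
    intro x hx y
    have hfilter : I x ∩ I y = {u ∈ U | u ∈ I x ∧ u ∈ I y} := by
      ext u
      simp only [mem_inter, mem_filter]
      exact ⟨fun h => ⟨hU x hx h.1, h⟩, fun h => h.2⟩
    rw [hfilter, card_filter]
    exact sum_congr rfl fun u _ => by rw [ite_zero_mul_ite_zero, mul_one]
  simp only [card_filter, sum_mul_sum]
  rw [sum_congr rfl fun x hx => sum_congr rfl fun y _ => hinter x hx y]
  exact (sum_congr rfl fun x _ => sum_comm).trans sum_comm

def tentSum (A B : Finset ℕ) (m : ℕ) : ℕ :=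
  ∑ x ∈ A, ∑ y ∈ B, (m - Nat.dist x y)

theorem filter_mem_Ico_add_eq_inter_Icc (A : Finset ℕ) (m u : ℕ) :
    {x ∈ A | u ∈ Ico x (x + m)} = A ∩ Icc (u + 1 - m) u := by
  rw [← filter_mem_eq_inter]
  refine filter_congr fun x _ => ?_
  simp only [mem_Ico, mem_Icc]
  omega

theorem tentSum_eq_sum_card_inter_mul {N : ℕ} {A B : Finset ℕ} (hA : A ⊆ Icc 1 N) (m : ℕ) :
    tentSum A B m =
      ∑ u ∈ range (N + m), #(A ∩ Icc (u + 1 - m) u) * #(B ∩ Icc (u + 1 - m) u) := by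
  have hU : ∀ x ∈ A, Ico x (x + m) ⊆ range (N + m) := by
    intro x hx u hu
    have := mem_Icc.1 (hA hx)
    simp only [mem_Ico, mem_range] at hu ⊢
    omega
  simp only [tentSum, tsub_dist_eq_card_inter_Ico,
    sum_sum_card_inter_eq_sum_mul (fun x => Ico x (x + m)) A B hU,
    filter_mem_Ico_add_eq_inter_Icc]

theorem tentSum_le_tentSum_odd_even {N : ℕ} {A B : Finset ℕ} (hd : Disjoint A B)
    (hu : A ∪ B = Icc 1 N) (m : ℕ) :
    tentSum A B m ≤ tentSum {x ∈ Icc 1 N | Odd x} {x ∈ Icc 1 N | Even x} m := by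
  rw [tentSum_eq_sum_card_inter_mul (hu ▸ subset_union_left : A ⊆ Icc 1 N),
    tentSum_eq_sum_card_inter_mul (filter_subset _ _)]
  refine sum_le_sum fun u _ => mul_le_mul_of_add_eq_of_balanced ?_ ?_ ?_
  · rw [card_inter_add_card_inter_of_union_eq hd hu,
      card_inter_add_card_inter_of_union_eq (disjoint_filter_odd_filter_even _)
        (filter_odd_union_filter_even _)]
  · rw [filter_Icc_inter_Icc, filter_Icc_inter_Icc]
    exact card_filter_odd_Icc_le _ _
  · rw [filter_Icc_inter_Icc, filter_Icc_inter_Icc]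
    exact card_filter_even_Icc_le _ _

theorem sum_Ico_eq_sum_Ico_sub_mul_tsub (δ : ℕ → ℝ) {d M : ℕ} (hdM : d ≤ M) :
    ∑ k ∈ Ico d M, δ k =
      ∑ j ∈ Ico d M, (δ j - δ (j + 1)) * ((j + 1 - d : ℕ) : ℝ) + δ M * ((M - d : ℕ) : ℝ) := by
  induction M, hdM using Nat.le_induction with
  | base => simp
  | succ M hdM ih =>
    rw [sum_Ico_succ_top hdM, sum_Ico_succ_top hdM, ih,
      show M + 1 - d = M - d + 1 by omega]
    push_cast
    ring

def tentWeight (f : ℕ → ℝ) (M j : ℕ) : ℝ :=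
  (if j < M then f j - f (j + 1) else 0) - (if j + 1 < M then f (j + 1) - f (j + 2) else 0)

theorem eq_add_sum_tentWeight_mul (f : ℕ → ℝ) {M d : ℕ} (hd : d ∈ Icc 1 M) :
    f d = f M + ∑ j ∈ Ico 1 M, tentWeight f M j * ((j + 1 - d : ℕ) : ℝ) := by
  obtain ⟨hd1, hdM⟩ := mem_Icc.1 hd
  set δ : ℕ → ℝ := fun k => if k < M then f k - f (k + 1) else 0
  have htelescope : ∑ k ∈ Ico d M, δ k = f d - f M := by
    rw [sum_congr rfl fun k hk => if_pos (mem_Ico.1 hk).2, ← neg_sub (f M),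
      ← sum_Ico_sub f hdM, ← sum_neg_distrib]
    simp only [neg_sub]
  have hvanish : ∀ j ∈ Ico 1 M, j ∉ Ico d M → tentWeight f M j * ((j + 1 - d : ℕ) : ℝ) = 0 := by
    intro j hj hjd
    simp only [mem_Ico] at hj hjd
    rw [show j + 1 - d = 0 by omega, Nat.cast_zero, mul_zero]
  rw [← sum_subset (Ico_subset_Ico_left hd1) hvanish]
  rw [sum_Ico_eq_sum_Ico_sub_mul_tsub δ hdM] at htelescope
  simp only [δ, lt_irrefl, if_false, zero_mul, add_zero] at htelescope
  unfold tentWeight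
  linarith

theorem tentWeight_nonneg {f : ℕ → ℝ} {M : ℕ}
    (hconv : ∀ i, 1 ≤ i → i + 2 ≤ M → f (i + 1) - f (i + 2) ≤ f i - f (i + 1))
    (hlast : 0 ≤ f (M - 1) - f M) {j : ℕ} (hj : j ∈ Ico 1 M) : 0 ≤ tentWeight f M j := by
  obtain ⟨hj1, hjM⟩ := mem_Ico.1 hj
  unfold tentWeight
  rcases Nat.lt_or_ge (j + 1) M with h | h
  · rw [if_pos hjM, if_pos h]
    linarith [hconv j hj1 h]
  · rw [if_pos hjM, if_neg (by omega), show j = M - 1 by omega, Nat.sub_add_cancel (by omega)]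
    linarith

theorem sum_sum_eq_card_mul_card_mul_add_sum_tentWeight_mul (f : ℕ → ℝ) {M : ℕ}
    {A B : Finset ℕ} (hdist : ∀ x ∈ A, ∀ y ∈ B, Nat.dist x y ∈ Icc 1 M) :
    ∑ x ∈ A, ∑ y ∈ B, f (Nat.dist x y) =
      #A * #B * f M + ∑ j ∈ Ico 1 M, tentWeight f M j * (tentSum A B (j + 1) : ℝ) := by
  rw [sum_congr rfl fun x hx => sum_congr rfl fun y hy =>
    eq_add_sum_tentWeight_mul f (hdist x hx y hy)]
  simp only [sum_add_distrib, sum_const, nsmul_eq_mul, tentSum, Nat.cast_sum, mul_sum]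
  rw [← mul_assoc]
  congr 1
  exact (sum_congr rfl fun x _ => sum_comm).trans sum_comm

theorem sum_sum_le_of_tentSum_le {f : ℕ → ℝ} {M : ℕ}
    (hw : ∀ j ∈ Ico 1 M, 0 ≤ tentWeight f M j) {A B A' B' : Finset ℕ}
    (hdist : ∀ x ∈ A, ∀ y ∈ B, Nat.dist x y ∈ Icc 1 M)
    (hdist' : ∀ x ∈ A', ∀ y ∈ B', Nat.dist x y ∈ Icc 1 M)
    (hcard : #A * #B = #A' * #B') (htent : ∀ m, tentSum A B m ≤ tentSum A' B' m) :
    ∑ x ∈ A, ∑ y ∈ B, f (Nat.dist x y) ≤ ∑ x ∈ A', ∑ y ∈ B', f (Nat.dist x y) := by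
  rw [sum_sum_eq_card_mul_card_mul_add_sum_tentWeight_mul f hdist,
    sum_sum_eq_card_mul_card_mul_add_sum_tentWeight_mul f hdist']
  have hcard' : (#A : ℝ) * #B = #A' * #B' := by exact_mod_cast hcard
  rw [hcard']
  gcongr with j hj
  · exact hw j hj
  · exact_mod_cast htent (j + 1)

theorem dist_mem_Icc_of_union_eq {N : ℕ} {A B : Finset ℕ} (hd : Disjoint A B)
    (hu : A ∪ B = Icc 1 N) : ∀ x ∈ A, ∀ y ∈ B, Nat.dist x y ∈ Icc 1 (N - 1) := by
  intro x hx y hy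
  have hxN := mem_Icc.1 (hu ▸ mem_union_left B hx)
  have hyN := mem_Icc.1 (hu ▸ mem_union_right A hy)
  have hxy : x ≠ y := fun h => disjoint_left.1 hd hx (h ▸ hy)
  rw [mem_Icc]
  unfold Nat.dist
  omega

theorem image_two_mul_add_one_range (n : ℕ) :
    (range n).image (fun i => 2 * i + 1) = {x ∈ Icc 1 (2 * n) | Odd x} := by
  ext x
  simp only [mem_image, mem_range, mem_filter, mem_Icc]
  constructor
  · rintro ⟨i, hi, rfl⟩
    exact ⟨by omega, i, rfl⟩
  · rintro ⟨hx, i, rfl⟩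
    exact ⟨i, by omega, rfl⟩

theorem image_two_mul_add_two_range (n : ℕ) :
    (range n).image (fun i => 2 * i + 2) = {x ∈ Icc 1 (2 * n) | Even x} := by
  ext x
  simp only [mem_image, mem_range, mem_filter, mem_Icc]
  constructor
  · rintro ⟨i, hi, rfl⟩
    exact ⟨by omega, i + 1, by ring⟩
  · rintro ⟨hx, i, rfl⟩
    exact ⟨i - 1, by omega, by omega⟩

theorem alternating_partition_optimal_general
    (n : ℕ) (f : ℕ → ℝ)
    (hconv : ∀ i : ℕ, 1 ≤ i → i + 2 ≤ 2 * n - 1 →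
      f (i + 1) - f (i + 2) ≤ f i - f (i + 1))
    (hlast : 0 ≤ f (2 * n - 2) - f (2 * n - 1))
    (A B : Finset ℕ) (hdisj : Disjoint A B)
    (hunion : A ∪ B = Finset.Icc 1 (2 * n))
    (hA : A.card = n) (hB : B.card = n) :
    ∑ x ∈ A, ∑ y ∈ B, f (Nat.dist x y) ≤
      ∑ x ∈ (Finset.range n).image (fun i => 2 * i + 1),
        ∑ y ∈ (Finset.range n).image (fun i => 2 * i + 2), f (Nat.dist x y) := by
  have hcard₀ : #((range n).image (fun i => 2 * i + 1)) *
      #((range n).image (fun i => 2 * i + 2)) = n * n := by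
    rw [card_image_of_injective _ fun a b h => by omega,
      card_image_of_injective _ fun a b h => by omega, card_range]
  rw [image_two_mul_add_one_range, image_two_mul_add_two_range] at hcard₀ ⊢
  have hd₀ := disjoint_filter_odd_filter_even (Icc 1 (2 * n))
  have hu₀ := filter_odd_union_filter_even (Icc 1 (2 * n))
  exact sum_sum_le_of_tentSum_le
    (fun j hj => tentWeight_nonneg hconv (by rwa [show 2 * n - 1 - 1 = 2 * n - 2 by omega]) hj)
    (dist_mem_Icc_of_union_eq hdisj hunion) (dist_mem_Icc_of_union_eq hd₀ hu₀)
    (by rw [hA, hB, hcard₀]) (tentSum_le_tentSum_odd_even hdisj hunion)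

/-- Let `n ≥ 2` and let `f : [2n−1] → ℝ` satisfy
`f(1)−f(2) ≥ f(2)−f(3) ≥ ⋯ ≥ f(2n−2)−f(2n−1) ≥ 0`.  Then the alternating partition
`(A₀, B₀) = ({1,3,…,2n−1}, {2,4,…,2n})` maximizes `Σ_{x∈A} Σ_{y∈B} f(|x−y|)` over all
partitions `(A,B) ∈ P_{2n}` (pairs of disjoint sets with `|A| = |B| = n` and
`A ∪ B = {1,…,2n}`). -/
theorem alternating_partition_optimal
    (n : ℕ) (hn : 2 ≤ n) (f : ℕ → ℝ)
    (hconv : ∀ i : ℕ, 1 ≤ i → i + 2 ≤ 2 * n - 1 →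
      f (i + 1) - f (i + 2) ≤ f i - f (i + 1))
    (hlast : 0 ≤ f (2 * n - 2) - f (2 * n - 1))
    (A B : Finset ℕ) (hdisj : Disjoint A B)
    (hunion : A ∪ B = Finset.Icc 1 (2 * n))
    (hA : A.card = n) (hB : B.card = n) :
    ∑ x ∈ A, ∑ y ∈ B, f (Nat.dist x y) ≤
      ∑ x ∈ (Finset.range n).image (fun i => 2 * i + 1),
        ∑ y ∈ (Finset.range n).image (fun i => 2 * i + 2), f (Nat.dist x y) :=
  alternating_partition_optimal_general n f hconv hlast A B hdisj hunion hA hB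
end

section
/- Let n ≥ 1 and l ∈ [2n−1]. Then Σ_{i=1}^{⌊(l+1)/2⌋} (2n−2i+1)(l−2i+2) = c_{2n,l}. -/
/-- The constant `c_{2n,l}`: for `l` even, `−l³/12 + (2n−1)l²/4 + (6n−1)l/6`, and for
`l` odd, `−l³/12 + (2n−1)l²/4 + (12n−5)l/12 + (2n−1)/4`. -/
noncomputable def cConst (n l : ℕ) : ℝ :=
  if Even l then
    -(l : ℝ) ^ 3 / 12 + (2 * (n : ℝ) - 1) * (l : ℝ) ^ 2 / 4 + (6 * (n : ℝ) - 1) * (l : ℝ) / 6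
  else
    -(l : ℝ) ^ 3 / 12 + (2 * (n : ℝ) - 1) * (l : ℝ) ^ 2 / 4
      + (12 * (n : ℝ) - 5) * (l : ℝ) / 12 + (2 * (n : ℝ) - 1) / 4

lemma sum_quadratic (b c : ℝ) : ∀ m : ℕ,
    ∑ i ∈ Finset.Icc 1 m, ((b - 2 * (i : ℝ)) * (c - 2 * (i : ℝ)))
      = (m : ℝ) * b * c - (b + c) * ((m : ℝ) * ((m : ℝ) + 1))
        + 4 * ((m : ℝ) * ((m : ℝ) + 1) * (2 * (m : ℝ) + 1)) / 6 := by
  intro m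
  induction m with
  | zero => simp
  | succ k ih =>
    rw [Finset.sum_Icc_succ_top (by omega), ih]
    push_cast
    ring

/-- Let `n ≥ 1` and `l ∈ [2n−1]`.  Then
`Σ_{i=1}^{⌊(l+1)/2⌋} (2n−2i+1)(l−2i+2) = c_{2n,l}`. -/
theorem alternating_sum_eq_cConst
    (n l : ℕ) (hn : 1 ≤ n) (hl1 : 1 ≤ l) (hl2 : l ≤ 2 * n - 1) :
    ∑ i ∈ Finset.Icc 1 ((l + 1) / 2),
        ((2 * (n : ℝ) - 2 * (i : ℝ) + 1) * ((l : ℝ) - 2 * (i : ℝ) + 2)) = cConst n l := by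
  have key : ∑ i ∈ Finset.Icc 1 ((l + 1) / 2),
      ((2 * (n : ℝ) - 2 * (i : ℝ) + 1) * ((l : ℝ) - 2 * (i : ℝ) + 2))
      = ∑ i ∈ Finset.Icc 1 ((l + 1) / 2),
      ((2 * (n : ℝ) + 1 - 2 * (i : ℝ)) * ((l : ℝ) + 2 - 2 * (i : ℝ))) := by
    apply Finset.sum_congr rfl; intro i _; ring
  rw [key, sum_quadratic (2 * (n : ℝ) + 1) ((l : ℝ) + 2)]
  rcases Nat.even_or_odd l with ⟨k, hk⟩ | ⟨k, hk⟩
  · have hm : (l + 1) / 2 = k := by omega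
    rw [cConst, if_pos ⟨k, hk⟩, hm, hk]
    push_cast
    ring
  · have hm : (l + 1) / 2 = k + 1 := by omega
    rw [cConst, if_neg (by rw [hk]; simp [Nat.even_iff, Nat.add_mod]), hm, hk]
    push_cast
    ring
end

section
/- Let n ≥ 1 and l ∈ [2n−1]. Then Σ_{i=2}^{l} ⌊i/2⌋·⌈i/2⌉ + (2n−l)·⌊(l+1)/2⌋·⌈(l+1)/2⌉ + Σ_{i=2n−l+1}^{2n−1} ⌊(2n−i+1)/2⌋·⌈(2n−i+1)/2⌉ = c_{2n,l}. -/
noncomputable def Faux (l : ℕ) : ℝ :=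
  ∑ i ∈ Finset.Icc 2 l, ((i / 2 : ℕ) : ℝ) * (((i + 1) / 2 : ℕ) : ℝ)

lemma Faux_succ (l : ℕ) (h : 1 ≤ l) :
    Faux (l + 1) = Faux l + (((l + 1) / 2 : ℕ) : ℝ) * (((l + 2) / 2 : ℕ) : ℝ) := by
  unfold Faux
  rw [Finset.sum_Icc_succ_top (by omega)]

lemma Faux_closed (k : ℕ) :
    Faux (2 * k) = (2 * k) * (2 * k + 2) * (4 * (k : ℝ) - 1) / 24 ∧
    Faux (2 * k + 1) = (2 * k) * (2 * k + 2) * (4 * (k : ℝ) + 5) / 24 := by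
  induction k with
  | zero =>
    constructor
    · show Faux 0 = _
      unfold Faux
      rw [show Finset.Icc 2 0 = ∅ by rfl]
      simp
    · show Faux 1 = _
      unfold Faux
      rw [show Finset.Icc 2 1 = ∅ by rfl]
      simp
  | succ k ih =>
    obtain ⟨ih1, ih2⟩ := ih
    have h1 : Faux (2 * (k + 1)) = Faux (2 * k + 1)
        + (((2 * k + 2) / 2 : ℕ) : ℝ) * (((2 * k + 3) / 2 : ℕ) : ℝ) := by
      rw [show 2 * (k + 1) = (2 * k + 1) + 1 by omega, Faux_succ (2 * k + 1) (by omega),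
        show 2 * k + 1 + 1 = 2 * k + 2 from rfl, show 2 * k + 1 + 2 = 2 * k + 3 from rfl]
    have h2 : Faux (2 * (k + 1)) = (2 * (k + 1)) * (2 * (k + 1) + 2) * (4 * ((k : ℝ) + 1) - 1) / 24 := by
      rw [h1, ih2, show (2 * k + 2) / 2 = k + 1 by omega, show (2 * k + 3) / 2 = k + 1 by omega]
      push_cast
      ring
    constructor
    · rw [h2]; push_cast; ring
    · have h3 : Faux (2 * (k + 1) + 1) = Faux (2 * (k + 1))
          + (((2 * k + 3) / 2 : ℕ) : ℝ) * (((2 * k + 4) / 2 : ℕ) : ℝ) := by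
        rw [Faux_succ (2 * (k + 1)) (by omega),
          show 2 * (k + 1) + 1 = 2 * k + 3 by omega, show 2 * (k + 1) + 2 = 2 * k + 4 by omega]
      rw [h3, h2, show (2 * k + 3) / 2 = k + 1 by omega, show (2 * k + 4) / 2 = k + 2 by omega]
      push_cast
      ring

lemma reindex (n l : ℕ) (hn : 1 ≤ n) (hl2 : l ≤ 2 * n - 1) (F : ℕ → ℝ) :
    ∑ i ∈ Finset.Icc (2 * n - l + 1) (2 * n - 1), F (2 * n - i + 1)
      = ∑ j ∈ Finset.Icc 2 l, F j := by
  apply Finset.sum_nbij' (i := fun a => 2 * n - a + 1) (j := fun a => 2 * n - a + 1)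
  · intro a ha; simp only [Finset.mem_Icc] at *; omega
  · intro a ha; simp only [Finset.mem_Icc] at *; omega
  · intro a ha; simp only [Finset.mem_Icc] at *; omega
  · intro a ha; simp only [Finset.mem_Icc] at *; omega
  · intro a ha; rfl

/-- Let `n ≥ 1` and `l ∈ [2n−1]`.  Then
`Σ_{i=2}^{l} ⌊i/2⌋·⌈i/2⌉ + (2n−l)·⌊(l+1)/2⌋·⌈(l+1)/2⌉
  + Σ_{i=2n−l+1}^{2n−1} ⌊(2n−i+1)/2⌋·⌈(2n−i+1)/2⌉ = c_{2n,l}`.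
(Here `⌊m/2⌋ = m / 2` and `⌈m/2⌉ = (m+1) / 2` with natural division.) -/
theorem three_sums_eq_cConst
    (n l : ℕ) (hn : 1 ≤ n) (hl1 : 1 ≤ l) (hl2 : l ≤ 2 * n - 1) :
    (∑ i ∈ Finset.Icc 2 l, ((i / 2 : ℕ) : ℝ) * (((i + 1) / 2 : ℕ) : ℝ))
      + ((2 * n - l : ℕ) : ℝ) * (((l + 1) / 2 : ℕ) : ℝ) * (((l + 1 + 1) / 2 : ℕ) : ℝ)
      + ∑ i ∈ Finset.Icc (2 * n - l + 1) (2 * n - 1),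
          (((2 * n - i + 1) / 2 : ℕ) : ℝ) * (((2 * n - i + 1 + 1) / 2 : ℕ) : ℝ)
    = cConst n l := by
  have hre : (∑ i ∈ Finset.Icc (2 * n - l + 1) (2 * n - 1),
      (((2 * n - i + 1) / 2 : ℕ) : ℝ) * (((2 * n - i + 1 + 1) / 2 : ℕ) : ℝ)) = Faux l := by
    rw [reindex n l hn hl2 (fun m => ((m / 2 : ℕ) : ℝ) * (((m + 1) / 2 : ℕ) : ℝ))]
    rfl
  rw [hre]
  have hsub : ((2 * n - l : ℕ) : ℝ) = 2 * (n : ℝ) - l := by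
    have : l ≤ 2 * n := by omega
    push_cast [Nat.cast_sub this]; ring
  rcases Nat.even_or_odd l with ⟨k, hk⟩ | ⟨k, hk⟩
  · subst hk
    have hk1 : 1 ≤ k := by omega
    have hF := (Faux_closed k).1
    show Faux (k + k) + _ + Faux (k + k) = _
    rw [show k + k = 2 * k by ring] at *
    rw [hF, hsub, show (2 * k + 1) / 2 = k by omega, show (2 * k + 1 + 1) / 2 = k + 1 by omega,
      cConst, if_pos ⟨k, by ring⟩]
    push_cast
    ring
  · subst hk
    have hF := (Faux_closed k).2
    show Faux (2 * k + 1) + _ + Faux (2 * k + 1) = _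
    rw [hF, hsub, show (2 * k + 1 + 1) / 2 = k + 1 by omega,
      show (2 * k + 1 + 1 + 1) / 2 = k + 1 by omega,
      cConst, if_neg (by simp [Nat.even_add_one, parity_simps])]
    push_cast
    ring
end

section
/- Let n ≥ 1, let (A,B) ∈ P_{2n}, and let l ∈ [2n−1]. Then Σ_{i=1}^{l} (l+1−i)·|D_{A,B,i}| ≤ c_{2n,l}. -/
/-!
Slide the window `W u = [u - l, u]` across `[1, 2n]`. A pair at distance `i ≤ l` lies in
exactly `l + 1 - i` windows, so the weighted sum counts the pairs of `A × B` lying in a common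
window: it equals `∑ u, |A ∩ W u| * |B ∩ W u|`. As `A` and `B` split `W u ∩ [1, 2n]`, each term
is at most `⌊|W u ∩ [1, 2n]|² / 4⌋`, and these quarter-squares add up to exactly `c_{2n,l}`.
-/

/-- `E_{A,B} = {(min{a,b}, max{a,b}) : a ∈ A, b ∈ B}`. -/
def crossPairs (A B : Finset ℕ) : Finset (ℕ × ℕ) :=
  (A ×ˢ B).image fun p => (min p.1 p.2, max p.1 p.2)

/-- `D_{A,B,i} = {(a,b) ∈ E_{A,B} : b − a = i}`. -/
def distPairs (A B : Finset ℕ) (i : ℕ) : Finset (ℕ × ℕ) :=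
  (crossPairs A B).filter fun p => p.2 - p.1 = i

open Finset

lemma card_distPairs {A B : Finset ℕ} (hAB : Disjoint A B) (i : ℕ) :
    #(distPairs A B i) = #{p ∈ A ×ˢ B | max p.1 p.2 - min p.1 p.2 = i} := by
  have hne := disjoint_iff_ne.1 hAB
  have hinj : Set.InjOn (fun p : ℕ × ℕ => (min p.1 p.2, max p.1 p.2)) ↑(A ×ˢ B) := by
    rintro ⟨a, b⟩ hp ⟨a', b'⟩ hq h
    obtain ⟨ha, hb⟩ := mem_product.1 (mem_coe.1 hp)
    obtain ⟨ha', hb'⟩ := mem_product.1 (mem_coe.1 hq)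
    have := hne a ha b hb
    have := hne a ha b' hb'
    have := hne a' ha' b hb
    have := hne a' ha' b' hb'
    simp only [Prod.mk.injEq] at h ⊢
    omega
  rw [distPairs, crossPairs, filter_image,
    card_image_of_injOn (hinj.mono (coe_subset.2 (filter_subset _ _)))]

-- Truncated subtraction makes the summand vanish on pairs at distance greater than `l`.
lemma sum_weighted_card_distPairs {A B : Finset ℕ} (hAB : Disjoint A B) (l : ℕ) :
    ∑ i ∈ Icc 1 l, (l + 1 - i) * #(distPairs A B i) =
      ∑ p ∈ A ×ˢ B, (l + 1 - (max p.1 p.2 - min p.1 p.2)) := by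
  simp_rw [card_distPairs hAB, card_filter, mul_sum]
  rw [sum_comm]
  refine sum_congr rfl fun p hp => ?_
  have hne := disjoint_iff_ne.1 hAB p.1 (mem_product.1 hp).1 p.2 (mem_product.1 hp).2
  simp only [mul_ite, mul_one, mul_zero, sum_ite_eq, mem_Icc]
  split_ifs <;> omega

lemma card_filter_mem_Icc_sub {N a b : ℕ} (ha : a ∈ Icc 1 N) (hb : b ∈ Icc 1 N) (l : ℕ) :
    #{u ∈ Icc 1 (N + l) | a ∈ Icc (u - l) u ∧ b ∈ Icc (u - l) u} =
      l + 1 - (max a b - min a b) := by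
  rw [mem_Icc] at ha hb
  have : {u ∈ Icc 1 (N + l) | a ∈ Icc (u - l) u ∧ b ∈ Icc (u - l) u} =
      Icc (max a b) (min a b + l) := by
    ext u
    simp only [mem_filter, mem_Icc]
    omega
  rw [this, Nat.card_Icc]
  omega

lemma sum_card_filter_mem_eq_sum_card_inter_mul {α ι : Type*} [DecidableEq α]
    (A B : Finset α) (U : Finset ι) (W : ι → Finset α) :
    ∑ p ∈ A ×ˢ B, #{u ∈ U | p.1 ∈ W u ∧ p.2 ∈ W u} =
      ∑ u ∈ U, #(A ∩ W u) * #(B ∩ W u) := by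
  simp_rw [card_filter]
  rw [sum_comm]
  refine sum_congr rfl fun u _ => ?_
  rw [← card_product, ← card_filter]
  congr 1
  ext p
  simp only [mem_product, mem_filter, mem_inter]
  tauto

lemma Nat.mul_le_add_sq_div_four (a b : ℕ) : a * b ≤ (a + b) ^ 2 / 4 := by
  rw [Nat.le_div_iff_mul_le four_pos]
  nlinarith [sq_nonneg ((a : ℤ) - b)]

lemma card_inter_mul_card_inter_le {α : Type*} [DecidableEq α] {A B : Finset α}
    (hAB : Disjoint A B) (W : Finset α) :
    #(A ∩ W) * #(B ∩ W) ≤ #((A ∪ B) ∩ W) ^ 2 / 4 := by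
  rw [union_inter_distrib_right,
    card_union_of_disjoint (hAB.mono inter_subset_left inter_subset_left)]
  exact Nat.mul_le_add_sq_div_four _ _

def quarterSquareSum (l : ℕ) : ℕ := ∑ k ∈ Ioc 0 l, k ^ 2 / 4

lemma quarterSquareSum_succ (l : ℕ) :
    quarterSquareSum (l + 1) = quarterSquareSum l + (l + 1) ^ 2 / 4 :=
  sum_Ioc_succ_top (Nat.zero_le l) _

lemma quarterSquareSum_formula (l : ℕ) :
    24 * quarterSquareSum l + 6 * ((l + 1) / 2) = l * (l + 1) * (2 * l + 1) := by
  induction l with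
  | zero => rfl
  | succ l ih =>
    have hcube : (l + 1) * (l + 1 + 1) * (2 * (l + 1) + 1) =
        l * (l + 1) * (2 * l + 1) + 6 * (l + 1) ^ 2 := by ring
    rw [quarterSquareSum_succ, hcube]
    obtain ⟨m, hm | hm⟩ := Nat.even_or_odd' (l + 1)
    · have : (l + 1) ^ 2 = 4 * (m * m) := by rw [hm]; ring
      rw [this]
      generalize m * m = M
      omega
    · have : (l + 1) ^ 2 = 4 * (m * m + m) + 1 := by rw [hm]; ring
      rw [this]
      generalize m * m + m = M
      omega

lemma card_Icc_inter_Icc_sub (N l u : ℕ) :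
    #(Icc 1 N ∩ Icc (u - l) u) = min N u + 1 - max 1 (u - l) := by
  have : Icc 1 N ∩ Icc (u - l) u = Icc (max 1 (u - l)) (min N u) := by
    ext x
    simp only [mem_inter, mem_Icc]
    omega
  rw [this, Nat.card_Icc]

/-- A window of length `l + 1` sliding across `[1, N]` meets it in `u` points while entering,
in `l + 1` points in the middle and in `N + l + 1 - u` points while leaving. -/
lemma sum_card_Icc_inter_Icc_sub_sq_div_four {N l : ℕ} (hl : l ≤ N) :
    ∑ u ∈ Icc 1 (N + l), #(Icc 1 N ∩ Icc (u - l) u) ^ 2 / 4 =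
      2 * quarterSquareSum l + (N - l) * ((l + 1) ^ 2 / 4) := by
  simp_rw [card_Icc_inter_Icc_sub]
  rw [show Icc 1 (N + l) = Ioc 0 (N + l) from Icc_add_one_left_eq_Ioc 0 (N + l),
    ← sum_Ioc_consecutive _ (Nat.zero_le N) (Nat.le_add_right N l),
    ← sum_Ioc_consecutive _ (Nat.zero_le l) hl]
  have entering :
      ∑ u ∈ Ioc 0 l, (min N u + 1 - max 1 (u - l)) ^ 2 / 4 = quarterSquareSum l := by
    refine sum_congr rfl fun u hu => ?_
    rw [mem_Ioc] at hu
    rw [show min N u + 1 - max 1 (u - l) = u by omega]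
  have middle : ∑ u ∈ Ioc l N, (min N u + 1 - max 1 (u - l)) ^ 2 / 4 =
      (N - l) * ((l + 1) ^ 2 / 4) := by
    rw [← Nat.card_Ioc, ← smul_eq_mul, ← sum_const]
    refine sum_congr rfl fun u hu => ?_
    rw [mem_Ioc] at hu
    rw [show min N u + 1 - max 1 (u - l) = l + 1 by omega]
  have leaving : ∑ u ∈ Ioc N (N + l), (min N u + 1 - max 1 (u - l)) ^ 2 / 4 =
      quarterSquareSum l := by
    refine sum_nbij' (fun u => N + l + 1 - u) (fun v => N + l + 1 - v) ?_ ?_ ?_ ?_ ?_ <;>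
      intro u hu <;> simp only [mem_Ioc] at hu ⊢
    all_goals try omega
    rw [show min N u + 1 - max 1 (u - l) = N + l + 1 - u by omega]
  rw [entering, middle, leaving]
  ring

lemma sum_weighted_card_distPairs_le {N l : ℕ} {A B : Finset ℕ} (hAB : Disjoint A B)
    (hunion : A ∪ B = Icc 1 N) (hl : l ≤ N) :
    ∑ i ∈ Icc 1 l, (l + 1 - i) * #(distPairs A B i) ≤
      2 * quarterSquareSum l + (N - l) * ((l + 1) ^ 2 / 4) := by
  have hmem : ∀ p ∈ A ×ˢ B, p.1 ∈ Icc 1 N ∧ p.2 ∈ Icc 1 N := fun p hp => by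
    rw [← hunion]
    exact ⟨mem_union_left _ (mem_product.1 hp).1, mem_union_right _ (mem_product.1 hp).2⟩
  calc _ = ∑ p ∈ A ×ˢ B, (l + 1 - (max p.1 p.2 - min p.1 p.2)) :=
        sum_weighted_card_distPairs hAB l
    _ = ∑ p ∈ A ×ˢ B,
          #{u ∈ Icc 1 (N + l) | p.1 ∈ Icc (u - l) u ∧ p.2 ∈ Icc (u - l) u} :=
        sum_congr rfl fun p hp => (card_filter_mem_Icc_sub (hmem p hp).1 (hmem p hp).2 l).symm
    _ = ∑ u ∈ Icc 1 (N + l), #(A ∩ Icc (u - l) u) * #(B ∩ Icc (u - l) u) :=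
        sum_card_filter_mem_eq_sum_card_inter_mul A B _ _
    _ ≤ ∑ u ∈ Icc 1 (N + l), #(Icc 1 N ∩ Icc (u - l) u) ^ 2 / 4 := by
        gcongr with u
        rw [← hunion]
        exact card_inter_mul_card_inter_le hAB _
    _ = _ := sum_card_Icc_inter_Icc_sub_sq_div_four hl

lemma cConst_eq {n l : ℕ} (hl : l ≤ 2 * n) :
    cConst n l = ((2 * quarterSquareSum l + (2 * n - l) * ((l + 1) ^ 2 / 4) : ℕ) : ℝ) := by
  have hS := quarterSquareSum_formula l
  obtain ⟨m, rfl | rfl⟩ := Nat.even_or_odd' l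
  · rw [show (2 * m + 1) / 2 = m by omega] at hS
    have hsq : (2 * m + 1) ^ 2 / 4 = m * m + m := by
      rw [show (2 * m + 1) ^ 2 = 4 * (m * m + m) + 1 by ring]
      omega
    have hSR := congrArg (Nat.cast : ℕ → ℝ) hS
    rw [cConst, if_pos (even_two_mul m), hsq]
    push_cast [Nat.cast_sub hl] at hSR ⊢
    linear_combination -hSR / 12
  · rw [show (2 * m + 1 + 1) / 2 = m + 1 by omega] at hS
    have hsq : (2 * m + 1 + 1) ^ 2 / 4 = (m + 1) * (m + 1) := by
      rw [show (2 * m + 1 + 1) ^ 2 = 4 * ((m + 1) * (m + 1)) by ring]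
      omega
    have hSR := congrArg (Nat.cast : ℕ → ℝ) hS
    rw [cConst, if_neg (Nat.not_even_two_mul_add_one m), hsq]
    push_cast [Nat.cast_sub hl] at hSR ⊢
    linear_combination -hSR / 12

theorem weighted_distPairs_card_le_cConst_general
    (n : ℕ) (A B : Finset ℕ) (hdisj : Disjoint A B)
    (hunion : A ∪ B = Finset.Icc 1 (2 * n))
    (l : ℕ) (hl2 : l ≤ 2 * n - 1) :
    ∑ i ∈ Finset.Icc 1 l, ((l + 1 - i : ℕ) : ℝ) * ((distPairs A B i).card : ℝ) ≤
      cConst n l := by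
  rw [cConst_eq (by omega)]
  exact_mod_cast sum_weighted_card_distPairs_le hdisj hunion (by omega)

/-- Let `n ≥ 1`, let `(A,B) ∈ P_{2n}`, and let `l ∈ [2n−1]`.  Then
`Σ_{i=1}^{l} (l+1−i)·|D_{A,B,i}| ≤ c_{2n,l}`. -/
theorem weighted_distPairs_card_le_cConst
    (n : ℕ) (hn : 1 ≤ n) (A B : Finset ℕ) (hdisj : Disjoint A B)
    (hunion : A ∪ B = Finset.Icc 1 (2 * n))
    (hA : A.card = n) (hB : B.card = n)
    (l : ℕ) (hl1 : 1 ≤ l) (hl2 : l ≤ 2 * n - 1) :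
    ∑ i ∈ Finset.Icc 1 l, ((l + 1 - i : ℕ) : ℝ) * ((distPairs A B i).card : ℝ) ≤
      cConst n l :=
  weighted_distPairs_card_le_cConst_general n A B hdisj hunion l hl2
end

section
/- Let n ≥ 2, let f : [2n−1] → ℝ be arbitrary, and define b_j = (f(j)−f(j+1)) − (f(j+1)−f(j+2)) for j ∈ [2n−3] and b_{2n−2} = f(2n−2)−f(2n−1). Let (A₀, B₀) = ({1,3,…,2n−1}, {2,4,…,2n}) be the alternating partition of [2n]. Then Σ_{x∈A₀} Σ_{y∈B₀} f(|x−y|) = n²·f(2n−1) + Σ_{j=1}^{2n−2} c_{2n,j}·b_j. -/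
open Finset

lemma cConst_zero (n : ℕ) : cConst n 0 = 0 := by simp [cConst]


lemma cConst_I2 (n t : ℕ) :
    cConst n (2*t+2) - 2*cConst n (2*t+1) + cConst n (2*t) = 0 := by
  have h1 : ¬ Even (2*t+1) := by simp [Nat.even_add_one]
  have h2 : Even (2*t+2) := ⟨t+1, by omega⟩
  have h3 : Even (2*t) := ⟨t, by omega⟩
  simp only [cConst, if_pos h2, if_neg h1, if_pos h3]
  push_cast
  ring


lemma cConst_I1 (n t : ℕ) :
    cConst n (2*t+1) - 2*cConst n (2*t) + cConst n (2*t-1)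
      = 2*((n:ℕ):ℝ) - 2*(t:ℝ) - 1 := by
  rcases t with _ | s
  · simp only [cConst]; norm_num; ring
  · have e1 : 2*(s+1)-1 = 2*s+1 := by omega
    have e2 : 2*(s+1)+1 = 2*s+3 := by omega
    have e3 : 2*(s+1) = 2*s+2 := by omega
    rw [e1, e2, e3]
    have h1 : ¬ Even (2*s+1) := by simp [Nat.even_add_one]
    have h2 : Even (2*s+2) := ⟨s+1, by omega⟩
    have h3 : ¬ Even (2*s+3) := by intro ⟨m, hm⟩; omega
    simp only [cConst, if_pos h2, if_neg h1, if_neg h3]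
    push_cast
    ring


lemma cConst_I3 (k : ℕ) :
    cConst (k+2) (2*k+3) - cConst (k+2) (2*k+2) = (((k+2:ℕ)):ℝ)^2 := by
  have h1 : ¬ Even (2*k+3) := by intro ⟨m, hm⟩; omega
  have h2 : Even (2*k+2) := ⟨k+1, by omega⟩
  simp only [cConst, if_pos h2, if_neg h1]
  push_cast
  ring


lemma parts_lemma (c f : ℕ → ℝ) (hc0 : c 0 = 0) : ∀ N : ℕ,
    ∑ i ∈ range N, c (i+1) * ((f (i+1) - f (i+2)) - (f (i+2) - f (i+3)))
      = ∑ i ∈ range (N+2), (c (i+1) - 2*c i + c (i-1)) * f (i+1)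
        - c (N+1) * f (N+1) - (c (N+2) - 2*c (N+1)) * f (N+2) := by
  intro N
  induction N with
  | zero => simp [Finset.sum_range_succ, hc0]
  | succ N ih =>
      have hR := Finset.sum_range_succ
        (fun i => (c (i+1) - 2*c i + c (i-1)) * f (i+1)) (N+2)
      simp only [show N+2-1 = N+1 from rfl] at hR
      rw [Finset.sum_range_succ, ih, show N+1+2 = N+2+1 from rfl, hR]
      ring


lemma even_split (F : ℕ → ℝ) (h0 : ∀ t, F (2*t+1) = 0) : ∀ m : ℕ,
    ∑ i ∈ range (2*m+1), F i = ∑ t ∈ range (m+1), F (2*t) := by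
  intro m
  induction m with
  | zero => simp
  | succ m ih =>
      have hR := Finset.sum_range_succ (fun t => F (2*t)) (m+1)
      rw [show 2*(m+1)+1 = (2*m+1)+1+1 by omega, Finset.sum_range_succ,
        Finset.sum_range_succ, ih, h0 m, hR, Finset.sum_range_succ,
        show 2*m+1+1 = 2*(m+1) by omega]
      ring


lemma rhs_eq (k : ℕ) (f b : ℕ → ℝ)
    (hb : ∀ j : ℕ, 1 ≤ j → j ≤ 2*k+1 →
      b j = (f j - f (j + 1)) - (f (j + 1) - f (j + 2)))
    (hblast : b (2*k+2) = f (2*k+2) - f (2*k+3)) :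
    ∑ j ∈ Finset.Icc 1 (2*k+2), cConst (k+2) j * b j
      = ∑ t ∈ range (k+2), (2*(((k+2:ℕ)):ℝ) - 2*(t:ℝ) - 1) * f (2*t+1)
        - (((k+2:ℕ)):ℝ)^2 * f (2*k+3) := by
  rw [show Finset.Icc 1 (2*k+2) = Finset.Ico 1 (2*k+3) from
      (Finset.Ico_add_one_right_eq_Icc 1 (2*k+2)).symm,
    Finset.sum_Ico_eq_sum_range]
  simp only [show 2*k+3-1 = 2*k+2 from rfl]
  have hS : ∑ i ∈ range (2*k+2), cConst (k+2) (1+i) * b (1+i)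
      = (∑ i ∈ range (2*k+1), cConst (k+2) (1+i) * b (1+i))
        + cConst (k+2) (2*k+2) * b (2*k+2) := by
    have h := Finset.sum_range_succ (fun i => cConst (k+2) (1+i) * b (1+i)) (2*k+1)
    rw [show 1+(2*k+1) = 2*k+2 by omega] at h
    exact h
  rw [hS, hblast]
  have hbody : ∑ i ∈ range (2*k+1), cConst (k+2) (1+i) * b (1+i)
      = ∑ i ∈ range (2*k+1),
          cConst (k+2) (i+1) * ((f (i+1) - f (i+2)) - (f (i+2) - f (i+3))) := by
    refine Finset.sum_congr rfl fun i hi => ?_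
    simp only [Finset.mem_range] at hi
    rw [show 1+i = i+1 by omega, hb (i+1) (by omega) (by omega)]
  rw [hbody, parts_lemma (cConst (k+2)) f (cConst_zero (k+2)) (2*k+1)]
  have h0 : ∀ t : ℕ, (cConst (k+2) ((2*t+1)+1) - 2*cConst (k+2) (2*t+1)
      + cConst (k+2) ((2*t+1)-1)) * f ((2*t+1)+1) = 0 := by
    intro t
    rw [show (2*t+1)+1 = 2*t+2 from rfl, show (2*t+1)-1 = 2*t from rfl,
      cConst_I2]
    ring
  have hES := even_split
    (fun i => (cConst (k+2) (i+1) - 2*cConst (k+2) i + cConst (k+2) (i-1)) * f (i+1))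
    h0 (k+1)
  rw [show 2*(k+1)+1 = 2*k+1+2 by omega] at hES
  rw [hES]
  have hmain : ∑ t ∈ range (k+1+1),
      (cConst (k+2) (2*t+1) - 2*cConst (k+2) (2*t) + cConst (k+2) (2*t-1)) * f (2*t+1)
        = ∑ t ∈ range (k+2), (2*(((k+2:ℕ)):ℝ) - 2*(t:ℝ) - 1) * f (2*t+1) := by
    refine Finset.sum_congr rfl fun t _ => ?_
    rw [cConst_I1 (k+2) t]
  rw [hmain]
  simp only [show 2*k+1+1 = 2*k+2 from rfl, show 2*k+1+2 = 2*k+3 from rfl]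
  have hI3 := cConst_I3 k
  linear_combination (-(f (2*k+3))) * hI3

lemma lhs_eq (f : ℕ → ℝ) : ∀ n : ℕ,
    ∑ i ∈ range n, ∑ j ∈ range n, f (Nat.dist (2*i+1) (2*j+2))
      = ∑ t ∈ range n, ((2*(n:ℝ)) - 2*(t:ℝ) - 1) * f (2*t+1) := by
  intro n
  induction n with
  | zero => simp
  | succ n ih =>
      rw [Finset.sum_range_succ]
      simp only [Finset.sum_range_succ]
      rw [Finset.sum_add_distrib]
      have hA : ∑ i ∈ range n, f (Nat.dist (2*i+1) (2*n+2))
          = ∑ i ∈ range n, f (2*i+3) := by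
        rw [← Finset.sum_range_reflect (fun i => f (Nat.dist (2*i+1) (2*n+2))) n]
        refine Finset.sum_congr rfl fun j hj => ?_
        simp only [Finset.mem_range] at hj
        congr 1
        simp only [Nat.dist]
        omega
      have hB : ∑ j ∈ range n, f (Nat.dist (2*n+1) (2*j+2))
          = ∑ j ∈ range n, f (2*j+1) := by
        rw [← Finset.sum_range_reflect (fun j => f (Nat.dist (2*n+1) (2*j+2))) n]
        refine Finset.sum_congr rfl fun j hj => ?_
        simp only [Finset.mem_range] at hj
        congr 1
        simp only [Nat.dist]
        omega
      have hC : Nat.dist (2*n+1) (2*n+2) = 1 := by simp [Nat.dist]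
      have hA2 : ∑ i ∈ range n, f (2*i+3) = ∑ t ∈ range n, f (2*(t+1)+1) :=
        Finset.sum_congr rfl fun i _ => by rw [show 2*(i+1)+1 = 2*i+3 by omega]
      have hA3 : ∑ t ∈ range (n+1), f (2*t+1)
          = ∑ t ∈ range n, f (2*(t+1)+1) + f 1 := by
        simpa using Finset.sum_range_succ' (fun t => f (2*t+1)) n
      have hA4 : ∑ t ∈ range (n+1), f (2*t+1)
          = ∑ t ∈ range n, f (2*t+1) + f (2*n+1) :=
        Finset.sum_range_succ _ n
      have hcoef : ∑ t ∈ range n, ((2*((n:ℝ)+1)) - 2*(t:ℝ) - 1) * f (2*t+1)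
          = ∑ t ∈ range n, ((2*(n:ℝ)) - 2*(t:ℝ) - 1) * f (2*t+1)
            + 2 * ∑ t ∈ range n, f (2*t+1) := by
        rw [Finset.mul_sum, ← Finset.sum_add_distrib]
        exact Finset.sum_congr rfl fun t _ => by ring
      rw [ih, hA, hB, hC, hA2]
      push_cast
      rw [hcoef, show (2*((n:ℝ)+1) - 2*(n:ℝ) - 1) * f (2*n+1) = f (2*n+1) by ring]
      have h5 := hA3
      rw [hA4] at h5
      linarith [h5]


/-- Let `n ≥ 2`, let `f : [2n−1] → ℝ` be arbitrary, and define
`b_j = (f(j)−f(j+1)) − (f(j+1)−f(j+2))` for `j ∈ [2n−3]` and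
`b_{2n−2} = f(2n−2)−f(2n−1)`.  Let `(A₀, B₀) = ({1,3,…,2n−1}, {2,4,…,2n})` be the
alternating partition of `[2n]`.  Then
`Σ_{x∈A₀} Σ_{y∈B₀} f(|x−y|) = n²·f(2n−1) + Σ_{j=1}^{2n−2} c_{2n,j}·b_j`. -/
theorem alternating_double_sum_eq_upper_bound
    (n : ℕ) (hn : 2 ≤ n) (f : ℕ → ℝ) (b : ℕ → ℝ)
    (hb : ∀ j : ℕ, 1 ≤ j → j ≤ 2 * n - 3 →
      b j = (f j - f (j + 1)) - (f (j + 1) - f (j + 2)))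
    (hblast : b (2 * n - 2) = f (2 * n - 2) - f (2 * n - 1)) :
    ∑ x ∈ (Finset.range n).image (fun i => 2 * i + 1),
        ∑ y ∈ (Finset.range n).image (fun i => 2 * i + 2), f (Nat.dist x y) =
      (n : ℝ) ^ 2 * f (2 * n - 1) + ∑ j ∈ Finset.Icc 1 (2 * n - 2), cConst n j * b j := by
  obtain ⟨k, rfl⟩ : ∃ k, n = k + 2 := ⟨n - 2, by omega⟩
  have hb' : ∀ j : ℕ, 1 ≤ j → j ≤ 2 * k + 1 →
      b j = (f j - f (j + 1)) - (f (j + 1) - f (j + 2)) := by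
    intro j h1 h2
    exact hb j h1 (by omega)
  have hbl' : b (2 * k + 2) = f (2 * k + 2) - f (2 * k + 3) := by
    have h := hblast
    rw [show 2 * (k + 2) - 2 = 2 * k + 2 by omega,
      show 2 * (k + 2) - 1 = 2 * k + 3 by omega] at h
    exact h
  rw [show 2 * (k + 2) - 2 = 2 * k + 2 by omega,
    show 2 * (k + 2) - 1 = 2 * k + 3 by omega]
  have hout : ∀ x ∈ range (k + 2), ∀ y ∈ range (k + 2),
      2 * x + 1 = 2 * y + 1 → x = y := fun x _ y _ h => by omega
  rw [Finset.sum_image hout]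
  have hin : ∀ x : ℕ,
      ∑ y ∈ (range (k + 2)).image (fun i => 2 * i + 2), f (Nat.dist x y)
        = ∑ j ∈ range (k + 2), f (Nat.dist x (2 * j + 2)) :=
    fun x => Finset.sum_image (fun a _ c _ h => by omega)
  simp only [hin]
  rw [lhs_eq f (k + 2), rhs_eq k f b hb' hbl']
  push_cast
  ring
end
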